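/- Let ψ = Σ_{i∈I} c_i ψ_i be a unit vector such that c_j ≠ 0 for some j ∈ ℬ and c_i ≠ 0 for at least one index i ≠ j. Then F_R(ψ) < 1, i.e., ψ is a resourceful pure state. -/

import Mathlib

/-!
Expanding `x` in the eigenbasis, `⟨x, U(2πT) x⟩ = ∑ₖ |cₖ|² e^{-2πi T Eₖ}` is a convex combination
of points on the unit circle. The closed unit disc is strictly convex, so the modulus is `< 1`
as soon as two points carrying positive weight differ. The phases of `i` and `j` differ because
`T Eᵢ - T Eⱼ` is irrational: it is an integer minus `T Eⱼ` if `i ∈ 𝒜`, and `T (Eᵢ - Eⱼ)` if `i ∈ ℬ`.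
-/

open Matrix Complex

noncomputable section

/-- Time-evolution unitary `U(t) = exp(-i t H)`. -/
def Uevol {d : ℕ} (H : Matrix (Fin d) (Fin d) ℂ) (t : ℝ) : Matrix (Fin d) (Fin d) ℂ :=
  NormedSpace.exp ((-(Complex.I * (t : ℂ))) • H)

/-- Revival fidelity `F_R(ψ) = |⟨ψ, U(2πT)ψ⟩|`. -/
def FR {d : ℕ} (H : Matrix (Fin d) (Fin d) ℂ) (T : ℕ) (x : Fin d → ℂ) : ℝ :=
  ‖(star x ⬝ᵥ (Uevol H (2 * Real.pi * T) *ᵥ x))‖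

/-- A free pure state: a unit vector with perfect revival. -/
def IsFreeState {d : ℕ} (H : Matrix (Fin d) (Fin d) ℂ) (T : ℕ) (x : Fin d → ℂ) : Prop :=
  star x ⬝ᵥ x = 1 ∧ FR H T x = 1

/-- A free unitary: a unitary matrix mapping every free pure state to a free pure state. -/
def IsFreeUnitary {d : ℕ} (H : Matrix (Fin d) (Fin d) ℂ) (T : ℕ)
    (V : Matrix (Fin d) (Fin d) ℂ) : Prop :=
  V ∈ Matrix.unitaryGroup (Fin d) ℂ ∧
    ∀ x : Fin d → ℂ, IsFreeState H T x → IsFreeState H T (V *ᵥ x)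

namespace Matrix

variable {n : Type*} [Fintype n]

theorem pow_mulVec_of_mulVec_eq_smul {α : Type*} [CommSemiring α] [DecidableEq n]
    {M : Matrix n n α} {v : n → α} {μ : α} (h : M *ᵥ v = μ • v) (k : ℕ) :
    (M ^ k) *ᵥ v = μ ^ k • v := by
  induction k with
  | zero => simp
  | succ k ih => rw [pow_succ, ← mulVec_mulVec, h, mulVec_smul, ih, smul_smul, pow_succ']

theorem exp_mulVec_of_mulVec_eq_smul {𝕂 : Type*} [RCLike 𝕂] [DecidableEq n]
    {M : Matrix n n 𝕂} {v : n → 𝕂} {μ : 𝕂} (h : M *ᵥ v = μ • v) :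
    NormedSpace.exp M *ᵥ v = NormedSpace.exp μ • v := by
  -- `exp` does not depend on the norm; the operator norm only makes the series summable.
  open scoped Norms.Operator in
  have hM := (NormedSpace.exp_series_hasSum_exp' (𝕂 := 𝕂) M).map (mulVec.addMonoidHomLeft v)
    (continuous_id.matrix_mulVec continuous_const)
  have hμ := (NormedSpace.exp_series_hasSum_exp' (𝕂 := 𝕂) μ).smul_const v
  refine hM.unique ?_
  simpa [Function.comp_def, mulVec.addMonoidHomLeft, smul_mulVec, pow_mulVec_of_mulVec_eq_smul h,
    smul_smul] using hμ

theorem star_sum_smul_dotProduct_sum_smul {ι α : Type*} [Fintype ι] [DecidableEq ι]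
    [CommSemiring α] [StarRing α] {ψ : ι → n → α}
    (horth : ∀ i j, star (ψ i) ⬝ᵥ ψ j = if i = j then 1 else 0) (a b : ι → α) :
    star (∑ k, a k • ψ k) ⬝ᵥ ∑ k, b k • ψ k = ∑ k, star (a k) * b k := by
  simp [star_sum, sum_dotProduct, dotProduct_sum, star_smul, smul_dotProduct, dotProduct_smul,
    horth, mul_comm]

end Matrix

theorem Uevol_mulVec_of_mulVec_eq_smul {d : ℕ} {H : Matrix (Fin d) (Fin d) ℂ} {v : Fin d → ℂ}
    {E : ℝ} (h : H *ᵥ v = (E : ℂ) • v) (t : ℝ) :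
    Uevol H t *ᵥ v = exp (↑(-(t * E)) * I) • v := by
  rw [Uevol, exp_mulVec_of_mulVec_eq_smul (μ := -(I * t) * E), ← Complex.exp_eq_exp_ℂ]
  · congr 2
    push_cast
    ring
  · rw [smul_mulVec, h, smul_smul]

theorem star_dotProduct_Uevol_mulVec_eq_sum {d : ℕ} {H : Matrix (Fin d) (Fin d) ℂ}
    {ψ : Fin d → Fin d → ℂ} {E : Fin d → ℝ}
    (horth : ∀ i j, star (ψ i) ⬝ᵥ ψ j = if i = j then 1 else 0)
    (heig : ∀ i, H *ᵥ ψ i = (E i : ℂ) • ψ i) (c : Fin d → ℂ) (t : ℝ) :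
    star (∑ k, c k • ψ k) ⬝ᵥ (Uevol H t *ᵥ ∑ k, c k • ψ k) =
      ∑ k, normSq (c k) • exp (↑(-(t * E k)) * I) := by
  simp only [mulVec_sum, mulVec_smul, Uevol_mulVec_of_mulVec_eq_smul (heig _), smul_smul,
    star_sum_smul_dotProduct_sum_smul horth, Complex.real_smul, ← mul_assoc, Complex.star_def,
    ← normSq_eq_conj_mul_self]

theorem exists_int_mul_sub_mul_eq_of_exp_eq {T a b : ℝ}
    (h : exp (↑(-(2 * Real.pi * T * a)) * I) = exp (↑(-(2 * Real.pi * T * b)) * I)) :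
    ∃ m : ℤ, T * a - T * b = m := by
  obtain ⟨m, hm⟩ := exp_eq_exp_iff_exists_int.1 h
  have him : -(2 * Real.pi * T * a) = -(2 * Real.pi * T * b) + m * (2 * Real.pi) := by
    simpa using congrArg Complex.im hm
  refine ⟨-m, mul_left_cancel₀ (by positivity : 2 * Real.pi ≠ 0) ?_⟩
  push_cast
  linear_combination -him

theorem resourceful_state_no_perfect_revival_general
    (d : ℕ)
    (H : Matrix (Fin d) (Fin d) ℂ)
    (ψ : Fin d → Fin d → ℂ) (E : Fin d → ℝ)
    (horth : ∀ i j : Fin d, star (ψ i) ⬝ᵥ ψ j = if i = j then 1 else 0)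
    (heig : ∀ i : Fin d, H *ᵥ ψ i = (E i : ℂ) • ψ i)
    (T : ℕ) (hT : 0 < T)
    (A B : Finset (Fin d))
    (hcover : A ∪ B = Finset.univ)
    (hArat : ∀ i ∈ A, ∃ m : ℤ, E i * (T : ℝ) = (m : ℝ))
    (hBirr : ∀ i ∈ B, Irrational (E i))
    (hBdiff : ∀ i ∈ B, ∀ j ∈ B, i ≠ j → Irrational (E i - E j))
    (c : Fin d → ℂ) (x : Fin d → ℂ) (hxdef : x = ∑ i : Fin d, c i • ψ i)
    (hx : star x ⬝ᵥ x = 1)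
    (j : Fin d) (hj : j ∈ B) (hcj : c j ≠ 0)
    (i : Fin d) (hij : i ≠ j) (hci : c i ≠ 0) :
    FR H T x < 1 := by
  have hgap : Irrational (T * E i - T * E j) := by
    rcases Finset.mem_union.1 (hcover ▸ Finset.mem_univ i) with hiA | hiB
    · obtain ⟨m, hm⟩ := hArat i hiA
      rw [mul_comm _ (E i), hm]
      exact ((hBirr j hj).natCast_mul hT.ne').intCast_sub m
    · rw [← mul_sub]
      exact (hBdiff i hiB j hj hij).natCast_mul hT.ne'
  have hweights : ∑ k, normSq (c k) = 1 := by
    rw [hxdef, star_sum_smul_dotProduct_sum_smul horth] at hx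
    simp only [Complex.star_def, ← normSq_eq_conj_mul_self] at hx
    exact_mod_cast hx
  rw [FR, hxdef, star_dotProduct_Uevol_mulVec_eq_sum horth heig]
  refine norm_sum_lt_of_strictConvexSpace (fun k _ => normSq_nonneg _) hweights
    (Finset.mem_univ i) (Finset.mem_univ j) (fun hphase => ?_) (normSq_pos.2 hci).ne'
    (normSq_pos.2 hcj).ne' fun k _ => (norm_exp_ofReal_mul_I _).le
  obtain ⟨m, hm⟩ := exists_int_mul_sub_mul_eq_of_exp_eq hphase
  exact hgap.ne_int m hm

theorem resourceful_state_no_perfect_revival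
    (d : ℕ) (hd : 2 ≤ d)
    (H : Matrix (Fin d) (Fin d) ℂ) (hH : H.IsHermitian)
    (ψ : Fin d → Fin d → ℂ) (E : Fin d → ℝ)
    (horth : ∀ i j : Fin d, star (ψ i) ⬝ᵥ ψ j = if i = j then 1 else 0)
    (heig : ∀ i : Fin d, H *ᵥ ψ i = (E i : ℂ) • ψ i)
    (T : ℕ) (hT : 0 < T)
    (A B : Finset (Fin d))
    (hdisj : Disjoint A B) (hcover : A ∪ B = Finset.univ)
    (hArat : ∀ i ∈ A, ∃ m : ℤ, E i * (T : ℝ) = (m : ℝ))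
    (hBirr : ∀ i ∈ B, Irrational (E i))
    (hBdiff : ∀ i ∈ B, ∀ j ∈ B, i ≠ j → Irrational (E i - E j))
    (hAcard : 1 < A.card) (hBcard : 1 < B.card)
    (c : Fin d → ℂ) (x : Fin d → ℂ) (hxdef : x = ∑ i : Fin d, c i • ψ i)
    (hx : star x ⬝ᵥ x = 1)
    (j : Fin d) (hj : j ∈ B) (hcj : c j ≠ 0)
    (i : Fin d) (hij : i ≠ j) (hci : c i ≠ 0) :
    FR H T x < 1 :=
  resourceful_state_no_perfect_revival_general d H ψ E horth heig T hT A B hcover hArat hBirr hBdiff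
    c x hxdef hx j hj hcj i hij hci
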